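/- arXiv:2310.08882 — 2 statements merged into one kernel-verified Lean document; each statement's English description precedes it below -/
import Mathlib

section
/- With A the fat Cantor set of measure 1/2, g := 2·χ_A, g_i := χ_{D_i}/(L_{i-1}-L_i), f(x) := ∫_0^x g(s) ds and f_i(x) := ∫_0^x g_i(s) ds, the functions f_i converge to f uniformly on [0,1]; in fact f_{i+1} = f outside A_i and |f_{i+1}-f| ≤ 2^{-i} everywhere. -/
open MeasureTheory ENNReal

/-
Between consecutive intervals of `A i` the running integral of a nonnegative density that puts
mass `2^{-i}` on each of the `2^i` intervals is forced: past `k` intervals it equals `k 2^{-i}`,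
whichever density it is. So the primitives of `g` and of `g_{i+1}` agree off `A i`, and on an
interval of `A i` both increase from `k 2^{-i}` to `(k+1) 2^{-i}`, hence differ by at most `2^{-i}`.
-/

open Set Filter Topology

theorem setIntegral_Ioc_eq_zero_of_forall_Ioo {h : ℝ → ℝ} {c x : ℝ}
    (h0 : ∀ y ∈ Ioo c x, h y = 0) : ∫ t in Ioc c x, h t = 0 := by
  rw [integral_Ioc_eq_integral_Ioo, setIntegral_congr_fun measurableSet_Ioo h0]
  simp

theorem setIntegral_Ioc_add_Ioc {h : ℝ → ℝ} {c d e : ℝ} (hint : IntegrableOn h (Ioc c e))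
    (hcd : c ≤ d) (hde : d ≤ e) :
    (∫ t in Ioc c d, h t) + ∫ t in Ioc d e, h t = ∫ t in Ioc c e, h t := by
  rw [← Ioc_union_Ioc_eq_Ioc hcd hde] at hint ⊢
  exact (setIntegral_union (Ioc_disjoint_Ioc_of_le le_rfl) measurableSet_Ioc
    (hint.mono_set subset_union_left) (hint.mono_set subset_union_right)).symm

theorem tendstoUniformlyOn_of_dist_succ_le {α β : Type*} [PseudoMetricSpace β]
    {F : ℕ → α → β} {f : α → β} {s : Set α} {u : ℕ → ℝ} (hu : Tendsto u atTop (𝓝 0))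
    (h : ∀ i, ∀ x ∈ s, dist (f x) (F (i + 1) x) ≤ u i) : TendstoUniformlyOn F f atTop s := by
  rw [Metric.tendstoUniformlyOn_iff]
  intro ε hε
  obtain ⟨N, hN⟩ := eventually_atTop.1 (hu.eventually (gt_mem_nhds hε))
  refine eventually_atTop.2 ⟨N + 1, fun i hi x hx => ?_⟩
  obtain ⟨j, rfl⟩ := Nat.exists_eq_succ_of_ne_zero (by omega : i ≠ 0)
  exact (h j x hx).trans_lt (hN j (by omega))

structure OrderedSubintervals (n : ℕ) (a b : ℕ → ℝ) : Prop where
  le : ∀ k < n, a k ≤ b k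
  nonneg : ∀ k < n, 0 ≤ a k
  le_one : ∀ k < n, b k ≤ 1
  b_le_a_succ : ∀ k, k + 1 < n → b k ≤ a (k + 1)

def InGap (n : ℕ) (a b : ℕ → ℝ) (k : ℕ) (x : ℝ) : Prop :=
  (∀ j < k, b j ≤ x) ∧ ∀ j, k ≤ j → j < n → x ≤ a j

structure EqualMassOn (n : ℕ) (a b : ℕ → ℝ) (m : ℝ) (h : ℝ → ℝ) : Prop where
  eq_zero : ∀ x ∉ ⋃ k ∈ Finset.range n, Icc (a k) (b k), h x = 0
  integrableOn : IntegrableOn h (Icc 0 1)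
  setIntegral_Icc : ∀ k < n, ∫ t in Icc (a k) (b k), h t = m

variable {n : ℕ} {a b : ℕ → ℝ}

namespace OrderedSubintervals

theorem b_le_a (hI : OrderedSubintervals n a b) {j k : ℕ} (hjk : j < k) (hk : k < n) :
    b j ≤ a k := by
  induction k with
  | zero => omega
  | succ k ih =>
    rcases Nat.lt_succ_iff_lt_or_eq.1 hjk with hjk | rfl
    · exact (ih hjk (by omega)).trans ((hI.le k (by omega)).trans (hI.b_le_a_succ k hk))
    · exact hI.b_le_a_succ j hk

theorem a_le_a (hI : OrderedSubintervals n a b) {j k : ℕ} (hjk : j ≤ k) (hk : k < n) :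
    a j ≤ a k := by
  rcases hjk.eq_or_lt with rfl | hjk
  · rfl
  · exact (hI.le j (by omega)).trans (hI.b_le_a hjk hk)

theorem b_le_b (hI : OrderedSubintervals n a b) {j k : ℕ} (hjk : j ≤ k) (hk : k < n) :
    b j ≤ b k := by
  rcases hjk.eq_or_lt with rfl | hjk
  · rfl
  · exact (hI.b_le_a hjk hk).trans (hI.le k hk)

theorem inGap_a (hI : OrderedSubintervals n a b) {k : ℕ} (hk : k < n) : InGap n a b k (a k) :=
  ⟨fun _ hj => hI.b_le_a hj hk, fun _ hj hjn => hI.a_le_a hj hjn⟩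

theorem inGap_b (hI : OrderedSubintervals n a b) {k : ℕ} (hk : k < n) :
    InGap n a b (k + 1) (b k) :=
  ⟨fun _ hj => hI.b_le_b (Nat.le_of_lt_succ hj) hk, fun _ hj hjn => hI.b_le_a hj hjn⟩

theorem exists_inGap (hI : OrderedSubintervals n a b) {x : ℝ}
    (hx : x ∉ ⋃ k ∈ Finset.range n, Icc (a k) (b k)) : ∃ k ≤ n, InGap n a b k x := by
  classical
  simp only [mem_iUnion, Finset.mem_range, mem_Icc, not_exists, not_and, not_le] at hx
  -- the index of the first interval to the right of `x`, or `n` if there is none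
  have hex : ∃ k, k = n ∨ (k < n ∧ x < a k) := ⟨n, Or.inl rfl⟩
  refine ⟨Nat.find hex, ?_, fun j hj => ?_, fun j hj hjn => ?_⟩
  · exact Nat.find_min' hex (Or.inl rfl)
  · have hjn : j < n := hj.trans_le (Nat.find_min' hex (Or.inl rfl))
    have hxa : a j ≤ x := not_lt.1 fun hxa => Nat.find_min hex hj (Or.inr ⟨hjn, hxa⟩)
    exact (hx j hjn hxa).le
  · rcases Nat.find_spec hex with h | ⟨hk, hxa⟩
    · omega
    · exact hxa.le.trans (hI.a_le_a hj hjn)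

end OrderedSubintervals

namespace EqualMassOn

variable {m : ℝ} {h : ℝ → ℝ}

theorem setIntegral_Ioc_eq_zero (hh : EqualMassOn n a b m h) {c x : ℝ}
    (hsep : ∀ j < n, b j ≤ c ∨ x ≤ a j) : ∫ t in Ioc c x, h t = 0 :=
  setIntegral_Ioc_eq_zero_of_forall_Ioo fun y hy => hh.eq_zero y <| by
    simp only [mem_iUnion, Finset.mem_range, not_exists]
    intro j hj hyj
    rcases hsep j hj with hbc | hxa
    · linarith [hy.1, hyj.2]
    · linarith [hy.2, hyj.1]

theorem setIntegral_Ioc_of_inGap (hI : OrderedSubintervals n a b) (hh : EqualMassOn n a b m h)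
    {k : ℕ} (hk : k ≤ n) {x : ℝ} (hx0 : 0 ≤ x) (hx1 : x ≤ 1) (hx : InGap n a b k x) :
    ∫ t in Ioc 0 x, h t = k * m := by
  induction k generalizing x with
  | zero =>
    rw [hh.setIntegral_Ioc_eq_zero fun j hj => Or.inr (hx.2 j (Nat.zero_le j) hj)]
    simp
  | succ k ih =>
    have hkn : k < n := hk
    have hak := hI.nonneg k hkn
    have habk := hI.le k hkn
    have hbx : b k ≤ x := hx.1 k k.lt_succ_self
    have hint : IntegrableOn h (Ioc 0 x) :=
      hh.integrableOn.mono_set (Ioc_subset_Icc_self.trans (Icc_subset_Icc_right hx1))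
    have hleft : ∫ t in Ioc 0 (a k), h t = k * m :=
      ih hkn.le hak (habk.trans (hI.le_one k hkn)) (hI.inGap_a hkn)
    have hmid : ∫ t in Ioc (a k) (b k), h t = m := by
      rw [← integral_Icc_eq_integral_Ioc, hh.setIntegral_Icc k hkn]
    have hright : ∫ t in Ioc (b k) x, h t = 0 := by
      refine hh.setIntegral_Ioc_eq_zero fun j hj => ?_
      rcases le_or_gt j k with hjk | hkj
      · exact Or.inl (hI.b_le_b hjk hkn)
      · exact Or.inr (hx.2 j hkj hj)
    rw [← setIntegral_Ioc_add_Ioc hint hak (habk.trans hbx), ← setIntegral_Ioc_add_Ioc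
      (hint.mono_set (Ioc_subset_Ioc_left hak)) habk hbx, hleft, hmid, hright]
    push_cast
    ring

theorem setIntegral_Ioc_mem_Icc (hI : OrderedSubintervals n a b) (hh : EqualMassOn n a b m h)
    (hnn : ∀ x, 0 ≤ h x) {k : ℕ} (hk : k < n) {x : ℝ} (hx : x ∈ Icc (a k) (b k)) :
    ∫ t in Ioc 0 x, h t ∈ Icc (k * m) ((k + 1) * m) := by
  have hak := hI.nonneg k hk
  have hb1 := hI.le_one k hk
  have hmono : ∀ ⦃c d⦄, c ≤ d → d ≤ 1 → ∫ t in Ioc 0 c, h t ≤ ∫ t in Ioc 0 d, h t :=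
    fun c d hcd hd1 => setIntegral_mono_set
      (hh.integrableOn.mono_set (Ioc_subset_Icc_self.trans (Icc_subset_Icc_right hd1)))
      (Eventually.of_forall hnn) (Ioc_subset_Ioc_right hcd).eventuallyLE
  have hleft :=
    hh.setIntegral_Ioc_of_inGap hI hk.le hak ((hI.le k hk).trans hb1) (hI.inGap_a hk)
  have hright :=
    hh.setIntegral_Ioc_of_inGap hI hk (hak.trans (hI.le k hk)) hb1 (hI.inGap_b hk)
  push_cast at hright
  exact ⟨hleft ▸ hmono hx.1 (hx.2.trans hb1), hright ▸ hmono hx.2 hb1⟩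

theorem setIntegral_Ioc_eq_of_notMem (hI : OrderedSubintervals n a b) {f₁ f₂ : ℝ → ℝ}
    (h₁ : EqualMassOn n a b m f₁) (h₂ : EqualMassOn n a b m f₂) {x : ℝ} (hx : x ∈ Icc 0 1)
    (hxU : x ∉ ⋃ k ∈ Finset.range n, Icc (a k) (b k)) :
    ∫ t in Ioc 0 x, f₁ t = ∫ t in Ioc 0 x, f₂ t := by
  obtain ⟨k, hk, hgap⟩ := hI.exists_inGap hxU
  rw [h₁.setIntegral_Ioc_of_inGap hI hk hx.1 hx.2 hgap,
    h₂.setIntegral_Ioc_of_inGap hI hk hx.1 hx.2 hgap]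

theorem abs_sub_setIntegral_Ioc_le (hI : OrderedSubintervals n a b) (hm : 0 ≤ m)
    {f₁ f₂ : ℝ → ℝ} (h₁ : EqualMassOn n a b m f₁) (h₂ : EqualMassOn n a b m f₂)
    (hf₁ : ∀ x, 0 ≤ f₁ x) (hf₂ : ∀ x, 0 ≤ f₂ x) {x : ℝ} (hx : x ∈ Icc 0 1) :
    |(∫ t in Ioc 0 x, f₁ t) - ∫ t in Ioc 0 x, f₂ t| ≤ m := by
  by_cases hxU : x ∈ ⋃ k ∈ Finset.range n, Icc (a k) (b k)
  · simp only [mem_iUnion, Finset.mem_range, exists_prop] at hxU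
    obtain ⟨k, hk, hxk⟩ := hxU
    have hdist := Real.dist_le_of_mem_Icc (h₁.setIntegral_Ioc_mem_Icc hI hf₁ hk hxk)
      (h₂.setIntegral_Ioc_mem_Icc hI hf₂ hk hxk)
    rwa [Real.dist_eq, ← sub_mul, add_sub_cancel_left, one_mul] at hdist
  · rw [h₁.setIntegral_Ioc_eq_of_notMem hI h₂ hx hxU, sub_self, abs_zero]
    exact hm

end EqualMassOn

theorem stmt_13 (A : ℕ → Set ℝ) (a b : ℕ → ℕ → ℝ)
    -- A i is the union of 2^i ordered closed intervals inside [0,1]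
    (hA : ∀ i, A i = ⋃ k ∈ Finset.range (2 ^ i), Set.Icc (a i k) (b i k))
    (hab : ∀ i k, k < 2 ^ i → a i k ≤ b i k ∧ 0 ≤ a i k ∧ b i k ≤ 1)
    (horder : ∀ i k, k + 1 < 2 ^ i → b i k ≤ a i (k + 1))
    (g : ℝ → ℝ) (gi : ℕ → ℝ → ℝ)
    (hg0 : ∀ x, 0 ≤ g x) (hgi0 : ∀ i x, 0 ≤ gi i x)
    -- g is supported in every A i, and gi (i+1) is supported in A i
    (hgsupp : ∀ i x, x ∉ A i → g x = 0)
    (hgisupp : ∀ i x, x ∉ A i → gi (i + 1) x = 0)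
    (hgint : IntegrableOn g (Set.Icc 0 1) volume)
    (hgiint : ∀ i, IntegrableOn (gi i) (Set.Icc 0 1) volume)
    -- on each of the 2^i intervals composing A i, g and gi (i+1) have mass 2^(-i)
    (hmass : ∀ i k, k < 2 ^ i →
      (∫ t in Set.Icc (a i k) (b i k), g t) = 1 / 2 ^ i ∧
      (∫ t in Set.Icc (a i k) (b i k), gi (i + 1) t) = 1 / 2 ^ i) :
    (∀ i, ∀ x ∈ Set.Icc (0 : ℝ) 1, x ∉ A i →
      (∫ t in Set.Ioc (0 : ℝ) x, gi (i + 1) t) = ∫ t in Set.Ioc (0 : ℝ) x, g t) ∧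
    (∀ i, ∀ x ∈ Set.Icc (0 : ℝ) 1,
      |(∫ t in Set.Ioc (0 : ℝ) x, gi (i + 1) t) - ∫ t in Set.Ioc (0 : ℝ) x, g t|
        ≤ 1 / 2 ^ i) ∧
    TendstoUniformlyOn (fun i x => ∫ t in Set.Ioc (0 : ℝ) x, gi i t)
      (fun x => ∫ t in Set.Ioc (0 : ℝ) x, g t) Filter.atTop (Set.Icc 0 1) := by
  have hI : ∀ i, OrderedSubintervals (2 ^ i) (a i) (b i) := fun i =>
    ⟨fun k hk => (hab i k hk).1, fun k hk => (hab i k hk).2.1, fun k hk => (hab i k hk).2.2,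
      horder i⟩
  have hg : ∀ i, EqualMassOn (2 ^ i) (a i) (b i) (1 / 2 ^ i) g := fun i =>
    ⟨fun x hx => hgsupp i x (hA i ▸ hx), hgint, fun k hk => (hmass i k hk).1⟩
  have hgi : ∀ i, EqualMassOn (2 ^ i) (a i) (b i) (1 / 2 ^ i) (gi (i + 1)) := fun i =>
    ⟨fun x hx => hgisupp i x (hA i ▸ hx), hgiint (i + 1), fun k hk => (hmass i k hk).2⟩
  have hclose : ∀ i, ∀ x ∈ Icc (0 : ℝ) 1,
      |(∫ t in Ioc 0 x, gi (i + 1) t) - ∫ t in Ioc 0 x, g t| ≤ 1 / 2 ^ i := fun i _ hx =>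
    (hgi i).abs_sub_setIntegral_Ioc_le (hI i) (by positivity) (hg i) (hgi0 (i + 1)) hg0 hx
  refine ⟨fun i x hx hxA => (hgi i).setIntegral_Ioc_eq_of_notMem (hI i) (hg i) hx (hA i ▸ hxA),
    hclose, tendstoUniformlyOn_of_dist_succ_le (u := fun i => (1 / 2 : ℝ) ^ i) ?_ fun i x hx => ?_⟩
  · exact tendsto_pow_atTop_nhds_zero_of_lt_one (by norm_num) (by norm_num)
  · rw [Real.dist_eq, abs_sub_comm, one_div_pow]
    exact hclose i x hx
end

section
/- Let f : [0,1] → ℝ be Lipschitz and differentiable at y ∈ (0,1). With ρ_i(x,y) := χ_{[0,1/i]}(|x-y|)·i, one has lim_{i→∞} (∫_0^1 |f(x)-f(y)|^q/|x-y|^q · ρ_i(x,y) dx)^{1/q} = 2^{1/q} |f'(y)| for every 1 < q < ∞ (here the factor 2 arises since the interval [y-1/i, y+1/i] has length 2/i). -/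
open MeasureTheory Filter Classical

/-!
The kernel `i · 𝟙{|x - y| ≤ 1/i}` has mass `2` and, once `1/i < min y (1 - y)`, is supported in
`[0, 1]`, so the `i`-th integral is twice the average of `|f x - f y|^q / |x - y|^q` over
`closedBall y (1/i)`. Differentiability at `y` makes this difference quotient tend to `|f'|^q` on
the punctured neighbourhood; since a point is null, the quotient lies a.e. in the ball of radius `ε`
about `|f'|^q` on small balls around `y`, hence so does its average, by convexity.
-/

open Metric Topology

theorem tendsto_setAverage_closedBall_of_tendsto_nhdsNE
    {α E : Type*} [PseudoMetricSpace α] [ProperSpace α] [MeasurableSpace α] [OpensMeasurableSpace α]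
    {μ : Measure α} [IsFiniteMeasureOnCompacts μ] [μ.IsOpenPosMeasure] [NullSingletonClass μ]
    [NormedAddCommGroup E] [NormedSpace ℝ E] [CompleteSpace E]
    {φ : α → E} {y : α} {L : E}
    (hφ : Tendsto φ (𝓝[≠] y) (𝓝 L)) (hmeas : StronglyMeasurableAtFilter φ (𝓝 y) μ) :
    Tendsto (fun r => ⨍ x in closedBall y r, φ x ∂μ) (𝓝[>] 0) (𝓝 L) := by
  rw [nhds_basis_closedBall.tendsto_right_iff]
  intro ε hε
  obtain ⟨s, hs, hφs⟩ := hmeas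
  obtain ⟨δ₁, hδ₁, hδ₁s⟩ := Metric.mem_nhds_iff.mp hs
  obtain ⟨δ₂, hδ₂, hδ₂φ⟩ := Metric.tendsto_nhdsWithin_nhds.mp hφ ε hε
  filter_upwards [Ioo_mem_nhdsGT (lt_min hδ₁ hδ₂)] with r ⟨hr0, hrδ⟩
  have hball : closedBall y r ⊆ ball y (min δ₁ δ₂) := closedBall_subset_ball hrδ
  have hclose : ∀ᵐ x ∂μ.restrict (closedBall y r), φ x ∈ closedBall L ε := by
    filter_upwards [ae_restrict_mem measurableSet_closedBall,
      ae_restrict_of_ae (compl_mem_ae_iff.mpr (measure_singleton y))] with x hx hxy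
    exact (hδ₂φ hxy (lt_of_lt_of_le (hball hx) (min_le_right _ _))).le
  have hfin := measure_closedBall_lt_top (μ := μ) (x := y) (r := r)
  refine (convex_closedBall L ε).set_average_mem isClosed_closedBall
    (measure_closedBall_pos μ y hr0).ne' hfin.ne hclose ?_
  refine .of_bound hfin (hφs.mono_measure (Measure.restrict_mono ?_ le_rfl)) (‖L‖ + ε) ?_
  · exact hball.trans ((ball_subset_ball (min_le_left _ _)).trans hδ₁s)
  · filter_upwards [hclose] with x hx using norm_le_of_mem_closedBall hx

theorem HasDerivAt.tendsto_abs_slope {f : ℝ → ℝ} {f' y : ℝ} (hf : HasDerivAt f f' y) :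
    Tendsto (fun x => |f x - f y| / |x - y|) (𝓝[≠] y) (𝓝 |f'|) := by
  refine ((continuous_abs.tendsto f').comp (hasDerivAt_iff_tendsto_slope.mp hf)).congr fun x => ?_
  simp [slope_def_field, abs_div]

theorem stronglyMeasurableAtFilter_rpow_abs_slope {f : ℝ → ℝ} {s : Set ℝ} {y : ℝ} (q : ℝ)
    (hf : ContinuousOn f s) (hs : MeasurableSet s) (hys : s ∈ 𝓝 y) :
    StronglyMeasurableAtFilter (fun x => |f x - f y| ^ q / |x - y| ^ q) (𝓝 y) := by
  have hfm : AEMeasurable f (volume.restrict s) := hf.aemeasurable hs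
  exact ⟨s, hys, (by fun_prop : AEMeasurable _ _).aestronglyMeasurable⟩

theorem setIntegral_mul_ite_abs_sub_le {h : ℝ → ℝ} {s : Set ℝ} {y r : ℝ}
    (hr : 0 < r) (hsub : closedBall y r ⊆ s) :
    ∫ x in s, h x * (if |x - y| ≤ r then r⁻¹ else 0) = 2 * ⨍ x in closedBall y r, h x := by
  have hind : (fun x => h x * (if |x - y| ≤ r then r⁻¹ else 0))
      = (closedBall y r).indicator (fun x => r⁻¹ * h x) := by
    ext x
    by_cases hx : |x - y| ≤ r <;> simp [Real.dist_eq, hx, mul_comm]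
  rw [hind, setIntegral_indicator measurableSet_closedBall, Set.inter_eq_right.mpr hsub,
    integral_const_mul, setAverage_eq, Real.volume_real_closedBall hr.le, smul_eq_mul]
  field_simp

theorem stmt_14 (f : ℝ → ℝ) (K : NNReal) (hf : LipschitzOnWith K f (Set.Icc 0 1))
    (y f' : ℝ) (hy : y ∈ Set.Ioo (0 : ℝ) 1) (hderiv : HasDerivAt f f' y)
    (q : ℝ) (hq : 1 < q) :
    Tendsto (fun i : ℕ =>
        (∫ x in Set.Icc (0 : ℝ) 1,
            |f x - f y| ^ q / |x - y| ^ q * (if |x - y| ≤ 1 / (i : ℝ) then (i : ℝ) else 0))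
          ^ (1 / q))
      atTop (nhds ((2 : ℝ) ^ (1 / q) * |f'|)) := by
  have hq0 : 0 < q := zero_lt_one.trans hq
  set g : ℝ → ℝ := fun x => |f x - f y| ^ q / |x - y| ^ q
  have hg : Tendsto g (𝓝[≠] y) (𝓝 (|f'| ^ q)) :=
    (hderiv.tendsto_abs_slope.rpow_const (Or.inr hq0.le)).congr fun x =>
      Real.div_rpow (abs_nonneg _) (abs_nonneg _) q
  have hgm : StronglyMeasurableAtFilter g (𝓝 y) :=
    stronglyMeasurableAtFilter_rpow_abs_slope q hf.continuousOn measurableSet_Icc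
      (Icc_mem_nhds hy.1 hy.2)
  have hradius : Tendsto (fun i : ℕ => (i : ℝ)⁻¹) atTop (𝓝[>] 0) :=
    tendsto_inv_atTop_nhdsGT_zero.comp tendsto_natCast_atTop_atTop
  have hav := (tendsto_setAverage_closedBall_of_tendsto_nhdsNE hg hgm).comp hradius
  have hkernel : ∀ᶠ i : ℕ in atTop,
      2 * ⨍ x in closedBall y (i : ℝ)⁻¹, g x = ∫ x in Set.Icc (0 : ℝ) 1,
        g x * (if |x - y| ≤ 1 / (i : ℝ) then (i : ℝ) else 0) := by
    filter_upwards [hradius (Ioo_mem_nhdsGT (lt_min (sub_pos.mpr hy.2) hy.1))] with i ⟨hi0, hiy⟩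
    have hsub : closedBall y (i : ℝ)⁻¹ ⊆ Set.Icc 0 1 := by
      rw [Real.closedBall_eq_Icc]
      exact Set.Icc_subset_Icc (by linarith [min_le_right (1 - y) y])
        (by linarith [min_le_left (1 - y) y])
    rw [← setIntegral_mul_ite_abs_sub_le hi0 hsub, inv_inv, one_div]
  have hlim := ((hav.const_mul 2).congr' hkernel).rpow_const (p := 1 / q) (Or.inr (by positivity))
  convert hlim using 2
  rw [Real.mul_rpow zero_le_two (by positivity), one_div, Real.rpow_rpow_inv (abs_nonneg _) hq0.ne']
end
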